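/- arXiv:2603.13623 — 4 statements merged into one kernel-verified Lean document; each statement's English description precedes it below -/
import Mathlib

section
/- Let m < n be positive integers, λ ∈ ℝ, and X an m×n real matrix. Then J_m(λ)·X = X·J_n(λ)ᵀ if and only if X = [Y 0] where Y is an m×m matrix satisfying J_m(λ)·Y = Y·J_m(λ)ᵀ and Y is in the intertwining set of J_m(λ) (the last n−m columns of X vanish). -/
/-!
Pad `X` with zeros to an array `E : ℕ → ℕ → ℝ`. Since the `λ`-parts cancel and the nilpotent
parts of the Jordan cells shift rows resp. columns, `J_m(λ) X = X J_n(λ)ᵀ` says exactly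
`E (i + 1) j = E i (j + 1)` for all `i j`. Hence `E i j = E (i + j) 0`, which vanishes as soon as
`i + j ≥ m`; in particular the columns of index `≥ m` vanish, so `X` and its leading square block
`Y` have the same padding and satisfy the same relation.
-/

def JordanCell (k : ℕ) (l : ℝ) : Matrix (Fin k) (Fin k) ℝ :=
  Matrix.of fun i j => if i = j then l else if (i : ℕ) + 1 = (j : ℕ) then 1 else 0

open Matrix

section ZeroExtend

variable {α : Type*} [Zero α] {m n : ℕ}

def zeroExtend (X : Matrix (Fin m) (Fin n) α) (i j : ℕ) : α :=
  if h : i < m ∧ j < n then X ⟨i, h.1⟩ ⟨j, h.2⟩ else 0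

@[simp]
lemma zeroExtend_coe (X : Matrix (Fin m) (Fin n) α) (i : Fin m) (j : Fin n) :
    zeroExtend X i j = X i j := by
  simp [zeroExtend]

lemma zeroExtend_of_le_left (X : Matrix (Fin m) (Fin n) α) {i : ℕ} (hi : m ≤ i) (j : ℕ) :
    zeroExtend X i j = 0 :=
  dif_neg fun h => (h.1.trans_le hi).false

lemma zeroExtend_of_le_right (X : Matrix (Fin m) (Fin n) α) (i : ℕ) {j : ℕ} (hj : n ≤ j) :
    zeroExtend X i j = 0 :=
  dif_neg fun h => (h.2.trans_le hj).false

lemma zeroExtend_transpose (X : Matrix (Fin m) (Fin n) α) (i j : ℕ) :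
    zeroExtend Xᵀ j i = zeroExtend X i j := by
  simp only [zeroExtend, and_comm, transpose_apply]

end ZeroExtend

lemma sum_ite_val_eq_zeroExtend {α : Type*} [AddCommMonoid α] {m n : ℕ}
    (X : Matrix (Fin m) (Fin n) α) (a : ℕ) (j : Fin n) :
    ∑ k : Fin m, (if (k : ℕ) = a then X k j else 0) = zeroExtend X a j := by
  by_cases ha : a < m
  · rw [Fintype.sum_eq_single ⟨a, ha⟩ fun k hk => if_neg fun h => hk (Fin.ext h)]
    simp [zeroExtend, ha]
  · rw [zeroExtend_of_le_left X (not_lt.1 ha)]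
    exact Finset.sum_eq_zero fun k _ => if_neg fun h : (k : ℕ) = a => ha (h ▸ k.isLt)

lemma jordanCell_mul_apply {m n : ℕ} (l : ℝ) (X : Matrix (Fin m) (Fin n) ℝ)
    (i : Fin m) (j : Fin n) :
    (JordanCell m l * X) i j = l * X i j + zeroExtend X (i + 1) j := by
  calc (JordanCell m l * X) i j
      = ∑ k : Fin m,
          ((if k = i then l * X k j else (0 : ℝ)) + if (k : ℕ) = i + 1 then X k j else 0) := by
        rw [mul_apply]
        refine Finset.sum_congr rfl fun k _ => ?_
        simp only [JordanCell, of_apply, Fin.ext_iff]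
        split_ifs <;> first | omega | ring
    _ = l * X i j + zeroExtend X (i + 1) j := by
        rw [Finset.sum_add_distrib, Fintype.sum_ite_eq', sum_ite_val_eq_zeroExtend]

lemma mul_jordanCell_transpose_apply {m n : ℕ} (l : ℝ) (X : Matrix (Fin m) (Fin n) ℝ)
    (i : Fin m) (j : Fin n) :
    (X * (JordanCell n l)ᵀ) i j = l * X i j + zeroExtend X i (j + 1) := by
  rw [← transpose_apply (X * _), transpose_mul, transpose_transpose, jordanCell_mul_apply,
    zeroExtend_transpose, transpose_apply]

theorem jordanCell_mul_eq_mul_transpose_iff {m n : ℕ} (l : ℝ) (X : Matrix (Fin m) (Fin n) ℝ) :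
    JordanCell m l * X = X * (JordanCell n l)ᵀ ↔
      ∀ i j : ℕ, zeroExtend X (i + 1) j = zeroExtend X i (j + 1) := by
  constructor
  · intro h i j
    by_cases hi : i < m
    · by_cases hj : j < n
      · have hij := congrFun₂ h ⟨i, hi⟩ ⟨j, hj⟩
        rw [jordanCell_mul_apply, mul_jordanCell_transpose_apply] at hij
        exact add_left_cancel hij
      · rw [zeroExtend_of_le_right X _ (not_lt.1 hj), zeroExtend_of_le_right X _ (by omega)]
    · rw [zeroExtend_of_le_left X (by omega), zeroExtend_of_le_left X (not_lt.1 hi)]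
  · intro h
    ext i j
    rw [jordanCell_mul_apply, mul_jordanCell_transpose_apply, h]

lemma apply_eq_apply_add_zero_of_shift {α : Type*} {f : ℕ → ℕ → α}
    (hf : ∀ i j, f (i + 1) j = f i (j + 1)) (i j : ℕ) : f i j = f (i + j) 0 := by
  induction j generalizing i with
  | zero => rfl
  | succ j ih => rw [← hf, ih, Nat.add_right_comm, Nat.add_assoc]

lemma zeroExtend_eq_zero_of_intertwines {m n : ℕ} {l : ℝ} {X : Matrix (Fin m) (Fin n) ℝ}
    (hX : JordanCell m l * X = X * (JordanCell n l)ᵀ) {i j : ℕ} (hij : m ≤ i + j) :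
    zeroExtend X i j = 0 := by
  rw [apply_eq_apply_add_zero_of_shift ((jordanCell_mul_eq_mul_transpose_iff l X).1 hX),
    zeroExtend_of_le_left X hij]

lemma zeroExtend_eq_of_forall_dite {α : Type*} [Zero α] {m n : ℕ} (hmn : m ≤ n)
    {X : Matrix (Fin m) (Fin n) α} {Y : Matrix (Fin m) (Fin m) α}
    (hXY : ∀ (i : Fin m) (j : Fin n), if h : (j : ℕ) < m then X i j = Y i ⟨j, h⟩ else X i j = 0) :
    zeroExtend X = zeroExtend Y := by
  funext i j
  by_cases hi : i < m
  · by_cases hj : j < m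
    · simpa [zeroExtend, hi, hj, hj.trans_le hmn] using hXY ⟨i, hi⟩ ⟨j, hj.trans_le hmn⟩
    · rw [zeroExtend_of_le_right Y _ (not_lt.1 hj)]
      by_cases hjn : j < n
      · simpa [zeroExtend, hi, hj, hjn] using hXY ⟨i, hi⟩ ⟨j, hjn⟩
      · exact zeroExtend_of_le_right X _ (not_lt.1 hjn)
  · rw [zeroExtend_of_le_left X (not_lt.1 hi), zeroExtend_of_le_left Y (not_lt.1 hi)]

theorem intertwine_rect_jordanCell_lt_general (m n : ℕ) (hmn : m < n) (l : ℝ)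
    (X : Matrix (Fin m) (Fin n) ℝ) :
    JordanCell m l * X = X * (JordanCell n l).transpose ↔
      ∃ Y : Matrix (Fin m) (Fin m) ℝ,
        JordanCell m l * Y = Y * (JordanCell m l).transpose ∧
        ∀ (i : Fin m) (j : Fin n),
          if h : (j : ℕ) < m then X i j = Y i ⟨(j : ℕ), h⟩ else X i j = 0 := by
  constructor
  · intro hX
    have hXY : ∀ (i : Fin m) (j : Fin n),
        if h : (j : ℕ) < m then X i j = X.submatrix id (Fin.castLE hmn.le) i ⟨j, h⟩
        else X i j = 0 := by
      intro i j
      split_ifs with hj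
      · rfl
      · simpa only [zeroExtend_coe] using
          zeroExtend_eq_zero_of_intertwines hX (i := i) (j := j) (by omega)
    refine ⟨_, ?_, hXY⟩
    rwa [jordanCell_mul_eq_mul_transpose_iff, ← zeroExtend_eq_of_forall_dite hmn.le hXY,
      ← jordanCell_mul_eq_mul_transpose_iff]
  · rintro ⟨Y, hY, hXY⟩
    rwa [jordanCell_mul_eq_mul_transpose_iff, zeroExtend_eq_of_forall_dite hmn.le hXY,
      ← jordanCell_mul_eq_mul_transpose_iff]

/-- For `m < n`, a rectangular `X` satisfies `J_m(λ) X = X J_n(λ)ᵀ` iff `X = [Y 0]`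
with `Y` in the intertwining set of `J_m(λ)`. -/
theorem intertwine_rect_jordanCell_lt (m n : ℕ) (hm : 0 < m) (hmn : m < n) (l : ℝ)
    (X : Matrix (Fin m) (Fin n) ℝ) :
    JordanCell m l * X = X * (JordanCell n l).transpose ↔
      ∃ Y : Matrix (Fin m) (Fin m) ℝ,
        JordanCell m l * Y = Y * (JordanCell m l).transpose ∧
        ∀ (i : Fin m) (j : Fin n),
          if h : (j : ℕ) < m then X i j = Y i ⟨(j : ℕ), h⟩ else X i j = 0 :=
  intertwine_rect_jordanCell_lt_general m n hmn l X
end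

section
/- Let m > n be positive integers, λ ∈ ℝ, and X an m×n real matrix. Then J_m(λ)·X = X·J_n(λ)ᵀ if and only if X = [Y; 0] where Y is an n×n matrix satisfying J_n(λ)·Y = Y·J_n(λ)ᵀ (the last m−n rows of X vanish). -/
lemma jordan_mul_apply {m n : ℕ} (l : ℝ) (X : Matrix (Fin m) (Fin n) ℝ)
    (i : Fin m) (j : Fin n) :
    (JordanCell m l * X) i j
      = l * X i j + (if h : (i : ℕ) + 1 < m then X ⟨(i : ℕ) + 1, h⟩ j else 0) := by
  rw [Matrix.mul_apply]
  have hsum : ∀ k : Fin m,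
      (JordanCell m l) i k * X k j
        = (if i = k then l * X i j else 0)
          + (if (i : ℕ) + 1 = (k : ℕ) then X k j else 0) := by
    intro k
    simp only [JordanCell, Matrix.of_apply]
    by_cases h1 : i = k
    · subst h1; simp
    · rw [if_neg h1, if_neg h1]
      by_cases h2 : (i : ℕ) + 1 = (k : ℕ)
      · rw [if_pos h2, if_pos h2, one_mul, zero_add]
      · rw [if_neg h2, if_neg h2, zero_mul, zero_add]
  rw [Finset.sum_congr rfl (fun k _ => hsum k), Finset.sum_add_distrib]
  congr 1
  · simp
  · by_cases h : (i : ℕ) + 1 < m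
    · rw [dif_pos h]
      have he : ∀ k : Fin m,
          (if (i : ℕ) + 1 = (k : ℕ) then X k j else 0)
            = (if (⟨(i : ℕ) + 1, h⟩ : Fin m) = k then X k j else 0) := by
        intro k; congr 1; simp [Fin.ext_iff]
      rw [Finset.sum_congr rfl (fun k _ => he k)]
      simp
    · rw [dif_neg h]
      apply Finset.sum_eq_zero
      intro k _
      rw [if_neg]
      omega

lemma mul_jordanT_apply {m n : ℕ} (l : ℝ) (X : Matrix (Fin m) (Fin n) ℝ)
    (i : Fin m) (j : Fin n) :
    (X * (JordanCell n l).transpose) i j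
      = l * X i j + (if h : (j : ℕ) + 1 < n then X i ⟨(j : ℕ) + 1, h⟩ else 0) := by
  rw [Matrix.mul_apply]
  have hsum : ∀ k : Fin n,
      X i k * (JordanCell n l).transpose k j
        = (if j = k then l * X i j else 0)
          + (if (j : ℕ) + 1 = (k : ℕ) then X i k else 0) := by
    intro k
    simp only [JordanCell, Matrix.transpose_apply, Matrix.of_apply]
    by_cases h1 : j = k
    · subst h1; simp [mul_comm]
    · rw [if_neg h1, if_neg h1]
      by_cases h2 : (j : ℕ) + 1 = (k : ℕ)
      · rw [if_pos h2, if_pos h2, mul_one, zero_add]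
      · rw [if_neg h2, if_neg h2, mul_zero, zero_add]
  rw [Finset.sum_congr rfl (fun k _ => hsum k), Finset.sum_add_distrib]
  congr 1
  · simp
  · by_cases h : (j : ℕ) + 1 < n
    · rw [dif_pos h]
      have he : ∀ k : Fin n,
          (if (j : ℕ) + 1 = (k : ℕ) then X i k else 0)
            = (if (⟨(j : ℕ) + 1, h⟩ : Fin n) = k then X i k else 0) := by
        intro k; congr 1; simp [Fin.ext_iff]
      rw [Finset.sum_congr rfl (fun k _ => he k)]
      simp
    · rw [dif_neg h]
      apply Finset.sum_eq_zero
      intro k _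
      rw [if_neg]
      omega

lemma intertwine_iff {m n : ℕ} (l : ℝ) (X : Matrix (Fin m) (Fin n) ℝ) :
    JordanCell m l * X = X * (JordanCell n l).transpose ↔
      ∀ (i : Fin m) (j : Fin n),
        (if h : (i : ℕ) + 1 < m then X ⟨(i : ℕ) + 1, h⟩ j else 0)
          = (if h : (j : ℕ) + 1 < n then X i ⟨(j : ℕ) + 1, h⟩ else 0) := by
  constructor
  · intro hE i j
    have h1 := jordan_mul_apply l X i j
    rw [hE, mul_jordanT_apply] at h1
    exact (add_left_cancel h1).symm
  · intro hP
    ext i j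
    rw [jordan_mul_apply, mul_jordanT_apply, hP i j]

/-- For `m > n`, a rectangular `X` satisfies `J_m(λ) X = X J_n(λ)ᵀ` iff `X = [Y; 0]`
with `Y` in the intertwining set of `J_n(λ)`. -/
theorem intertwine_rect_jordanCell_gt (m n : ℕ) (hn : 0 < n) (hmn : n < m) (l : ℝ)
    (X : Matrix (Fin m) (Fin n) ℝ) :
    JordanCell m l * X = X * (JordanCell n l).transpose ↔
      ∃ Y : Matrix (Fin n) (Fin n) ℝ,
        JordanCell n l * Y = Y * (JordanCell n l).transpose ∧
        ∀ (i : Fin m) (j : Fin n),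
          if h : (i : ℕ) < n then X i j = Y ⟨(i : ℕ), h⟩ j else X i j = 0 := by
  rw [intertwine_iff]
  constructor
  · intro P
    have P' : ∀ (a b : ℕ) (ha : a < m) (hb : b < n),
        (if h : a + 1 < m then X ⟨a + 1, h⟩ ⟨b, hb⟩ else 0)
          = (if h : b + 1 < n then X ⟨a, ha⟩ ⟨b + 1, h⟩ else 0) :=
      fun a b ha hb => P ⟨a, ha⟩ ⟨b, hb⟩
    have Pstep : ∀ (a b : ℕ) (ha : a + 1 < m) (hb : b < n),
        X ⟨a + 1, ha⟩ ⟨b, hb⟩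
          = if h : b + 1 < n then X ⟨a, by omega⟩ ⟨b + 1, h⟩ else 0 := by
      intro a b ha hb
      have h := P' a b (by omega) hb
      rwa [dif_pos ha] at h
    have hz : ∀ t (a b : ℕ) (ha : a < m) (hb : b < n),
        b + t + 1 = n → 1 ≤ a → n ≤ a + b → X ⟨a, ha⟩ ⟨b, hb⟩ = 0 := by
      intro t
      induction t with
      | zero =>
        intro a b ha hb hbn ha1 _
        have h := Pstep (a - 1) b (by omega) hb
        rw [dif_neg (by omega)] at h
        have e : (⟨a, ha⟩ : Fin m) = ⟨a - 1 + 1, by omega⟩ :=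
          Fin.ext (show a = a - 1 + 1 by omega)
        rw [e]
        exact h
      | succ t ih =>
        intro a b ha hb hbn ha1 hab
        have h := Pstep (a - 1) b (by omega) hb
        rw [dif_pos (by omega : b + 1 < n)] at h
        have e : (⟨a, ha⟩ : Fin m) = ⟨a - 1 + 1, by omega⟩ :=
          Fin.ext (show a = a - 1 + 1 by omega)
        rw [e, h]
        exact ih (a - 1) (b + 1) (by omega) (by omega) (by omega) (by omega) (by omega)
    have hzero : ∀ (i : Fin m) (j : Fin n), n ≤ (i : ℕ) + (j : ℕ) → X i j = 0 := by
      intro i j hij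
      have hb := j.isLt
      have h := hz (n - 1 - (j : ℕ)) (i : ℕ) (j : ℕ) i.isLt j.isLt (by omega) (by omega) hij
      simpa using h
    refine ⟨Matrix.of fun (i j : Fin n) => X ⟨(i : ℕ), i.isLt.trans hmn⟩ j, ?_, ?_⟩
    · rw [intertwine_iff]
      intro i j
      by_cases hi : (i : ℕ) + 1 < n
      · rw [dif_pos hi]
        by_cases hj : (j : ℕ) + 1 < n
        · rw [dif_pos hj]
          have h := Pstep (i : ℕ) (j : ℕ) (by omega) j.isLt
          rw [dif_pos hj] at h
          simpa using h
        · rw [dif_neg hj]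
          have h := Pstep (i : ℕ) (j : ℕ) (by omega) j.isLt
          rw [dif_neg hj] at h
          simpa using h
      · rw [dif_neg hi]
        by_cases hj : (j : ℕ) + 1 < n
        · rw [dif_pos hj]
          have h := hzero ⟨(i : ℕ), by omega⟩ ⟨(j : ℕ) + 1, hj⟩ (by simp; omega)
          simpa using h.symm
        · rw [dif_neg hj]
    · intro i j
      by_cases h : (i : ℕ) < n
      · rw [dif_pos h]
        simp
      · rw [dif_neg h]
        exact hzero i j (by omega)
  · rintro ⟨Y, hY, hXY⟩
    rw [intertwine_iff] at hY
    have PY : ∀ (a b : ℕ) (ha : a < n) (hb : b < n),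
        (if h : a + 1 < n then Y ⟨a + 1, h⟩ ⟨b, hb⟩ else 0)
          = (if h : b + 1 < n then Y ⟨a, ha⟩ ⟨b + 1, h⟩ else 0) :=
      fun a b ha hb => hY ⟨a, ha⟩ ⟨b, hb⟩
    have hXY' : ∀ (i : Fin m) (j : Fin n) (h : (i : ℕ) < n), X i j = Y ⟨(i : ℕ), h⟩ j := by
      intro i j h
      have := hXY i j
      rwa [dif_pos h] at this
    have hX0 : ∀ (i : Fin m) (j : Fin n), n ≤ (i : ℕ) → X i j = 0 := by
      intro i j h
      have := hXY i j
      rwa [dif_neg (by omega)] at this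
    intro i j
    by_cases hi : (i : ℕ) + 1 < n
    · rw [dif_pos (by omega : (i : ℕ) + 1 < m)]
      rw [hXY' ⟨(i : ℕ) + 1, by omega⟩ j hi]
      by_cases hj : (j : ℕ) + 1 < n
      · rw [dif_pos hj, hXY' i ⟨(j : ℕ) + 1, hj⟩ (by omega)]
        have h2 := PY (i : ℕ) (j : ℕ) (by omega) j.isLt
        rw [dif_pos hi, dif_pos hj] at h2
        simpa using h2
      · rw [dif_neg hj]
        have h2 := PY (i : ℕ) (j : ℕ) (by omega) j.isLt
        rw [dif_pos hi, dif_neg hj] at h2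
        simpa using h2
    · by_cases hi' : (i : ℕ) < n
      · rw [dif_pos (by omega : (i : ℕ) + 1 < m)]
        rw [hX0 ⟨(i : ℕ) + 1, by omega⟩ j (show n ≤ (i : ℕ) + 1 by omega)]
        by_cases hj : (j : ℕ) + 1 < n
        · rw [dif_pos hj, hXY' i ⟨(j : ℕ) + 1, hj⟩ hi']
          have h2 := PY (i : ℕ) (j : ℕ) hi' j.isLt
          rw [dif_neg (by omega), dif_pos hj] at h2
          simpa using h2
        · rw [dif_neg hj]
      · have hLHS : (if h : (i : ℕ) + 1 < m then X ⟨(i : ℕ) + 1, h⟩ j else 0) = 0 := by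
          by_cases him : (i : ℕ) + 1 < m
          · rw [dif_pos him]
            exact hX0 ⟨(i : ℕ) + 1, him⟩ j (show n ≤ (i : ℕ) + 1 by omega)
          · rw [dif_neg him]
        rw [hLHS]
        by_cases hj : (j : ℕ) + 1 < n
        · rw [dif_pos hj, hX0 i ⟨(j : ℕ) + 1, hj⟩ (by omega)]
        · rw [dif_neg hj]
end

section
/- Let Λ = [[α, −β], [β, α]] with β > 0 and let J_n(Λ) be the 2n×2n block Jordan matrix with Λ on the diagonal blocks and I₂ on the superdiagonal blocks. A symmetric 2n×2n real matrix X satisfies J_n(Λ)·X = X·J_n(Λ)ᵀ if and only if X is a block Hankel matrix with 2×2 blocks X_{ij} = Z_{i+j-1} for i+j ≤ n+1 and X_{ij} = 0 for i+j > n+1, where each Z_k is a 2×2 matrix of the form [[a_k, b_k], [b_k, −a_k]]. -/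
open Matrix Finset

def JordanBlockL (n : ℕ) (Λ : Matrix (Fin 2) (Fin 2) ℝ) :
    Matrix (Fin n × Fin 2) (Fin n × Fin 2) ℝ :=
  Matrix.of fun p q =>
    if p.1 = q.1 then Λ p.2 q.2
    else if (p.1 : ℕ) + 1 = (q.1 : ℕ) then (if p.2 = q.2 then 1 else 0) else 0

lemma sum_ite_coe_eq {n : ℕ} (m : ℕ) (g : Fin n → ℝ) :
    ∑ k : Fin n, (if m = (k : ℕ) then g k else 0) =
      if h : m < n then g ⟨m, h⟩ else 0 := by
  split_ifs with h
  · rw [Finset.sum_eq_single ⟨m, h⟩]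
    · simp
    · intro k _ hk
      rw [if_neg]
      intro he
      exact hk (Fin.ext he.symm)
    · simp
  · apply Finset.sum_eq_zero
    intro k _
    rw [if_neg]
    have := k.2
    omega

lemma mulJ_entry (n : ℕ) (Λ : Matrix (Fin 2) (Fin 2) ℝ)
    (X : Matrix (Fin n × Fin 2) (Fin n × Fin 2) ℝ) (i j : Fin n) (s t : Fin 2) :
    (JordanBlockL n Λ * X) (i, s) (j, t) =
      (∑ u : Fin 2, Λ s u * X (i, u) (j, t)) +
        (if h : (i : ℕ) + 1 < n then X (⟨(i : ℕ) + 1, h⟩, s) (j, t) else 0) := by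
  rw [Matrix.mul_apply, Fintype.sum_prod_type]
  have hJ : ∀ (k : Fin n) (u : Fin 2),
      JordanBlockL n Λ (i, s) (k, u) * X (k, u) (j, t) =
        (if i = k then Λ s u * X (k, u) (j, t) else 0) +
          (if (i : ℕ) + 1 = (k : ℕ) then (if s = u then X (k, u) (j, t) else 0) else 0) := by
    intro k u
    rcases eq_or_ne i k with h1 | h1
    · subst h1
      rw [if_pos rfl, if_neg (by omega), add_zero]
      simp [JordanBlockL]
    · rw [if_neg h1]
      by_cases h2 : (i : ℕ) + 1 = (k : ℕ)
      · rw [if_pos h2]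
        simp only [JordanBlockL, Matrix.of_apply, if_neg h1, if_pos h2, zero_add]
        split_ifs <;> simp
      · simp [JordanBlockL, h1, h2]
  simp_rw [hJ, Finset.sum_add_distrib]
  congr 1
  · have h1 : ∀ k : Fin n, (∑ u : Fin 2, if i = k then Λ s u * X (k, u) (j, t) else 0)
        = if i = k then ∑ u : Fin 2, Λ s u * X (k, u) (j, t) else 0 := by
      intro k; split_ifs <;> simp
    rw [Finset.sum_congr rfl fun k _ => h1 k, Finset.sum_ite_eq]
    simp
  · have h2 : ∀ k : Fin n, (∑ u : Fin 2, if (i : ℕ) + 1 = (k : ℕ) then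
        (if s = u then X (k, u) (j, t) else 0) else 0)
        = if (i : ℕ) + 1 = (k : ℕ) then X (k, s) (j, t) else 0 := by
      intro k
      split_ifs with h
      · simp
      · simp
    rw [Finset.sum_congr rfl fun k _ => h2 k, sum_ite_coe_eq]

lemma mulJT_entry (n : ℕ) (Λ : Matrix (Fin 2) (Fin 2) ℝ)
    (X : Matrix (Fin n × Fin 2) (Fin n × Fin 2) ℝ) (i j : Fin n) (s t : Fin 2) :
    (X * (JordanBlockL n Λ).transpose) (i, s) (j, t) =
      (∑ u : Fin 2, X (i, s) (j, u) * Λ t u) +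
        (if h : (j : ℕ) + 1 < n then X (i, s) (⟨(j : ℕ) + 1, h⟩, t) else 0) := by
  rw [Matrix.mul_apply, Fintype.sum_prod_type]
  have hJ : ∀ (k : Fin n) (u : Fin 2),
      X (i, s) (k, u) * (JordanBlockL n Λ).transpose (k, u) (j, t) =
        (if j = k then X (i, s) (k, u) * Λ t u else 0) +
          (if (j : ℕ) + 1 = (k : ℕ) then (if t = u then X (i, s) (k, u) else 0) else 0) := by
    intro k u
    rw [Matrix.transpose_apply]
    rcases eq_or_ne j k with h1 | h1
    · subst h1
      rw [if_pos rfl, if_neg (by omega), add_zero]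
      simp [JordanBlockL]
    · rw [if_neg h1]
      by_cases h2 : (j : ℕ) + 1 = (k : ℕ)
      · rw [if_pos h2]
        simp only [JordanBlockL, Matrix.of_apply, if_neg h1, if_pos h2, zero_add]
        split_ifs <;> simp
      · simp [JordanBlockL, h1, h2]
  simp_rw [hJ, Finset.sum_add_distrib]
  congr 1
  · have h1 : ∀ k : Fin n, (∑ u : Fin 2, if j = k then X (i, s) (k, u) * Λ t u else 0)
        = if j = k then ∑ u : Fin 2, X (i, s) (k, u) * Λ t u else 0 := by
      intro k; split_ifs <;> simp
    rw [Finset.sum_congr rfl fun k _ => h1 k, Finset.sum_ite_eq]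
    simp
  · have h2 : ∀ k : Fin n, (∑ u : Fin 2, if (j : ℕ) + 1 = (k : ℕ) then
        (if t = u then X (i, s) (k, u) else 0) else 0)
        = if (j : ℕ) + 1 = (k : ℕ) then X (i, s) (k, t) else 0 := by
      intro k
      split_ifs with h
      · simp
      · simp
    rw [Finset.sum_congr rfl fun k _ => h2 k, sum_ite_coe_eq]

/-- Entries of `X` extended by zero outside the index range. -/
def Eext (n : ℕ) (X : Matrix (Fin n × Fin 2) (Fin n × Fin 2) ℝ)
    (i j : ℕ) (s t : Fin 2) : ℝ :=
  if h : i < n ∧ j < n then X (⟨i, h.1⟩, s) (⟨j, h.2⟩, t) else 0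

lemma Eext_of_lt {n : ℕ} {X : Matrix (Fin n × Fin 2) (Fin n × Fin 2) ℝ}
    {i j : ℕ} (hi : i < n) (hj : j < n) (s t : Fin 2) :
    Eext n X i j s t = X (⟨i, hi⟩, s) (⟨j, hj⟩, t) := dif_pos ⟨hi, hj⟩

lemma Eext_of_ge {n : ℕ} {X : Matrix (Fin n × Fin 2) (Fin n × Fin 2) ℝ}
    {i j : ℕ} (hij : n ≤ i ∨ n ≤ j) (s t : Fin 2) :
    Eext n X i j s t = 0 := dif_neg (by omega)

lemma Eext_succ_left {n : ℕ} {X : Matrix (Fin n × Fin 2) (Fin n × Fin 2) ℝ}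
    {i j : ℕ} (hj : j < n) (s t : Fin 2) :
    Eext n X (i + 1) j s t =
      if h : i + 1 < n then X (⟨i + 1, h⟩, s) (⟨j, hj⟩, t) else 0 := by
  by_cases h1 : i + 1 < n
  · rw [dif_pos h1, Eext_of_lt h1 hj]
  · rw [dif_neg h1, Eext_of_ge (Or.inl (by omega))]

lemma Eext_succ_right {n : ℕ} {X : Matrix (Fin n × Fin 2) (Fin n × Fin 2) ℝ}
    {i j : ℕ} (hi : i < n) (s t : Fin 2) :
    Eext n X i (j + 1) s t =
      if h : j + 1 < n then X (⟨i, hi⟩, s) (⟨j + 1, h⟩, t) else 0 := by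
  by_cases h1 : j + 1 < n
  · rw [dif_pos h1, Eext_of_lt hi h1]
  · rw [dif_neg h1, Eext_of_ge (Or.inr (by omega))]

section Main

variable {n : ℕ} {α β : ℝ} {X : Matrix (Fin n × Fin 2) (Fin n × Fin 2) ℝ}

lemma forward_dir (hβ : 0 < β)
    (h : JordanBlockL n !![α, -β; β, α] * X =
      X * (JordanBlockL n !![α, -β; β, α]).transpose) :
    ∃ a b : Fin n → ℝ, ∀ (i j : Fin n) (s t : Fin 2),
      if h : (i : ℕ) + (j : ℕ) < n then
        X (i, s) (j, t) =
          !![a ⟨(i : ℕ) + (j : ℕ), h⟩, b ⟨(i : ℕ) + (j : ℕ), h⟩;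
             b ⟨(i : ℕ) + (j : ℕ), h⟩, -(a ⟨(i : ℕ) + (j : ℕ), h⟩)] s t
      else X (i, s) (j, t) = 0 := by
  have hrelF : ∀ (i j : Fin n) (s t : Fin 2),
      (∑ u : Fin 2, !![α, -β; β, α] s u * X (i, u) (j, t)) +
          (if h : (i : ℕ) + 1 < n then X (⟨(i : ℕ) + 1, h⟩, s) (j, t) else 0) =
        (∑ u : Fin 2, X (i, s) (j, u) * !![α, -β; β, α] t u) +
          (if h : (j : ℕ) + 1 < n then X (i, s) (⟨(j : ℕ) + 1, h⟩, t) else 0) := by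
    intro i j s t
    rw [← mulJ_entry, ← mulJT_entry, h]
  have hrel : ∀ (i j : ℕ) (s t : Fin 2),
      (∑ u : Fin 2, !![α, -β; β, α] s u * Eext n X i j u t) + Eext n X (i + 1) j s t =
        (∑ u : Fin 2, Eext n X i j s u * !![α, -β; β, α] t u) +
          Eext n X i (j + 1) s t := by
    intro i j s t
    by_cases hij : i < n ∧ j < n
    · rw [Eext_succ_left hij.2, Eext_succ_right hij.1]
      simp only [Eext_of_lt hij.1 hij.2]
      exact hrelF ⟨i, hij.1⟩ ⟨j, hij.2⟩ s t
    · have h0 : n ≤ i ∨ n ≤ j := by omega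
      have h1 : n ≤ i + 1 ∨ n ≤ j := by omega
      have h2 : n ≤ i ∨ n ≤ j + 1 := by omega
      simp [Eext_of_ge h0, Eext_of_ge h1, Eext_of_ge h2]
  have hpq : ∀ (m i j : ℕ), 2 * n ≤ i + j + m →
      Eext n X i j 0 0 + Eext n X i j 1 1 = 0 ∧
        Eext n X i j 1 0 - Eext n X i j 0 1 = 0 := by
    intro m
    induction m with
    | zero =>
      intro i j hij
      have h0 : n ≤ i ∨ n ≤ j := by omega
      rw [Eext_of_ge h0, Eext_of_ge h0, Eext_of_ge h0, Eext_of_ge h0]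
      norm_num
    | succ m ih =>
      intro i j hij
      obtain ⟨hA, hB⟩ := ih i (j + 1) (by omega)
      obtain ⟨hC, hD⟩ := ih (i + 1) j (by omega)
      have h1 := hrel i j 0 0
      have h2 := hrel i j 1 1
      have h3 := hrel i j 0 1
      have h4 := hrel i j 1 0
      simp only [Fin.sum_univ_two] at h1 h2 h3 h4
      norm_num [Matrix.cons_val_zero, Matrix.cons_val_one, Matrix.head_cons,
        Matrix.head_fin_const, Matrix.cons_val', Matrix.empty_val',
        Matrix.cons_val_fin_one] at h1 h2 h3 h4
      constructor
      · have hb : β * (Eext n X i j 0 0 + Eext n X i j 1 1) = 0 := by ring_nf; nlinarith [h3, h4, hB, hD]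
        rcases mul_eq_zero.mp hb with hc | hc
        · exfalso; linarith
        · exact hc
      · have hb : β * (Eext n X i j 1 0 - Eext n X i j 0 1) = 0 := by ring_nf; nlinarith [h1, h2, hA, hC]
        rcases mul_eq_zero.mp hb with hc | hc
        · exfalso; linarith
        · exact hc
  have huv : ∀ (j i : ℕ),
      (Eext n X i j 0 0 - Eext n X i j 1 1 =
        Eext n X (i + j) 0 0 0 - Eext n X (i + j) 0 1 1) ∧
      (Eext n X i j 0 1 + Eext n X i j 1 0 =
        Eext n X (i + j) 0 0 1 + Eext n X (i + j) 0 1 0) := by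
    intro j
    induction j with
    | zero => intro i; exact ⟨rfl, rfl⟩
    | succ j ih =>
      intro i
      obtain ⟨ih1, ih2⟩ := ih (i + 1)
      have h1 := hrel i j 0 0
      have h2 := hrel i j 1 1
      have h3 := hrel i j 0 1
      have h4 := hrel i j 1 0
      simp only [Fin.sum_univ_two] at h1 h2 h3 h4
      norm_num [Matrix.cons_val_zero, Matrix.cons_val_one, Matrix.head_cons,
        Matrix.head_fin_const, Matrix.cons_val', Matrix.empty_val',
        Matrix.cons_val_fin_one] at h1 h2 h3 h4
      have harith : i + 1 + j = i + (j + 1) := by omega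
      rw [harith] at ih1 ih2
      constructor
      · linarith
      · linarith
  refine ⟨fun k => (Eext n X k 0 0 0 - Eext n X k 0 1 1) / 2,
    fun k => (Eext n X k 0 0 1 + Eext n X k 0 1 0) / 2, ?_⟩
  intro i j s t
  have hxE : ∀ (s t : Fin 2), X (i, s) (j, t) = Eext n X i j s t := by
    intro s t
    rw [Eext_of_lt i.2 j.2]
  obtain ⟨hp, hq⟩ := hpq (2 * n) i j (by omega)
  obtain ⟨hu, hv⟩ := huv j i
  split_ifs with hij
  · fin_cases s <;> fin_cases t <;> simp only [hxE] <;> simp <;> linarith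
  · have hk : n ≤ (i : ℕ) + (j : ℕ) := by omega
    rw [Eext_of_ge (Or.inl hk), Eext_of_ge (Or.inl hk)] at hu hv
    fin_cases s <;> fin_cases t <;> simp only [hxE, Fin.mk_zero, Fin.mk_one] <;> linarith

lemma backward_dir
    (hab : ∃ a b : Fin n → ℝ, ∀ (i j : Fin n) (s t : Fin 2),
      if h : (i : ℕ) + (j : ℕ) < n then
        X (i, s) (j, t) =
          !![a ⟨(i : ℕ) + (j : ℕ), h⟩, b ⟨(i : ℕ) + (j : ℕ), h⟩;
             b ⟨(i : ℕ) + (j : ℕ), h⟩, -(a ⟨(i : ℕ) + (j : ℕ), h⟩)] s t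
      else X (i, s) (j, t) = 0) :
    JordanBlockL n !![α, -β; β, α] * X =
      X * (JordanBlockL n !![α, -β; β, α]).transpose := by
  obtain ⟨a, b, hab⟩ := hab
  have hx' : ∀ (i j : Fin n) (s t : Fin 2) (k : ℕ) (hk : k < n),
      (i : ℕ) + (j : ℕ) = k →
      X (i, s) (j, t) = !![a ⟨k, hk⟩, b ⟨k, hk⟩; b ⟨k, hk⟩, -(a ⟨k, hk⟩)] s t := by
    intro i j s t k hk hsum
    subst hsum
    have := hab i j s t
    rwa [dif_pos hk] at this
  have hx0 : ∀ (i j : Fin n) (s t : Fin 2), ¬ ((i : ℕ) + (j : ℕ) < n) →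
      X (i, s) (j, t) = 0 := by
    intro i j s t hk
    have := hab i j s t
    rwa [dif_neg hk] at this
  ext ⟨i, s⟩ ⟨j, t⟩
  rw [mulJ_entry, mulJT_entry]
  have hterm : (if h : (i : ℕ) + 1 < n then X (⟨(i : ℕ) + 1, h⟩, s) (j, t) else 0) =
      (if h : (j : ℕ) + 1 < n then X (i, s) (⟨(j : ℕ) + 1, h⟩, t) else 0) := by
    by_cases hij : (i : ℕ) + (j : ℕ) + 1 < n
    · have h1 : (i : ℕ) + 1 < n := by omega
      have h2 : (j : ℕ) + 1 < n := by omega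
      rw [dif_pos h1, dif_pos h2,
        hx' ⟨(i : ℕ) + 1, h1⟩ j s t ((i : ℕ) + (j : ℕ) + 1) hij (by simp; omega),
        hx' i ⟨(j : ℕ) + 1, h2⟩ s t ((i : ℕ) + (j : ℕ) + 1) hij (by simp; omega)]
    · by_cases h1 : (i : ℕ) + 1 < n
      · by_cases h2 : (j : ℕ) + 1 < n
        · rw [dif_pos h1, dif_pos h2, hx0 _ _ _ _ (by simp; omega),
            hx0 _ _ _ _ (by simp; omega)]
        · rw [dif_pos h1, dif_neg h2, hx0 _ _ _ _ (by simp; omega)]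
      · by_cases h2 : (j : ℕ) + 1 < n
        · rw [dif_neg h1, dif_pos h2, hx0 _ _ _ _ (by simp; omega)]
        · rw [dif_neg h1, dif_neg h2]
  rw [hterm]
  congr 1
  by_cases hij : (i : ℕ) + (j : ℕ) < n
  · simp only [Fin.sum_univ_two]
    rw [hx' i j s 0 _ hij rfl, hx' i j s 1 _ hij rfl, hx' i j 0 t _ hij rfl,
      hx' i j 1 t _ hij rfl]
    fin_cases s <;> fin_cases t <;>
      simp [Matrix.cons_val_zero, Matrix.cons_val_one, Matrix.head_cons] <;> ring
  · simp only [Fin.sum_univ_two, hx0 i j _ _ hij]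
    ring

end Main

/-- A symmetric `2n × 2n` matrix `X` satisfies `J_n(Λ) X = X J_n(Λ)ᵀ` iff it is block
Hankel with `2 × 2` blocks of the form `[[a,b],[b,−a]]`. -/
theorem intertwine_jordanBlockL_iff_blockHankel (n : ℕ) (α β : ℝ) (hβ : 0 < β)
    (X : Matrix (Fin n × Fin 2) (Fin n × Fin 2) ℝ) (hX : X.transpose = X) :
    JordanBlockL n !![α, -β; β, α] * X =
        X * (JordanBlockL n !![α, -β; β, α]).transpose ↔
      ∃ a b : Fin n → ℝ, ∀ (i j : Fin n) (s t : Fin 2),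
        if h : (i : ℕ) + (j : ℕ) < n then
          X (i, s) (j, t) =
            !![a ⟨(i : ℕ) + (j : ℕ), h⟩, b ⟨(i : ℕ) + (j : ℕ), h⟩;
               b ⟨(i : ℕ) + (j : ℕ), h⟩, -(a ⟨(i : ℕ) + (j : ℕ), h⟩)] s t
        else X (i, s) (j, t) = 0 :=
  ⟨forward_dir hβ, backward_dir⟩
end

section
/- Let A and B be real square matrices (possibly of different sizes) with no common eigenvalues (over ℂ). Then the only matrix X satisfying A·X = X·B is X = 0. -/
open Polynomial Matrix

lemma aeval_comm_of_comm {m k : ℕ} (A : Matrix (Fin m) (Fin m) ℂ)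
    (B : Matrix (Fin k) (Fin k) ℂ) (X : Matrix (Fin m) (Fin k) ℂ)
    (hX : A * X = X * B) (p : ℂ[X]) :
    (aeval A p) * X = X * (aeval B p) := by
  induction p using Polynomial.induction_on' with
  | add p q hp hq => rw [map_add, map_add, Matrix.add_mul, Matrix.mul_add, hp, hq]
  | monomial n a =>
    have hpow : ∀ n : ℕ, A ^ n * X = X * B ^ n := by
      intro n
      induction n with
      | zero => simp
      | succ n ih =>
        rw [pow_succ, pow_succ, Matrix.mul_assoc, hX, ← Matrix.mul_assoc, ih, Matrix.mul_assoc]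
    simp [aeval_monomial, Algebra.algebraMap_eq_smul_one, mul_assoc, ← hpow n,
      ← mul_assoc, Matrix.smul_mul, Matrix.mul_smul]

lemma coprime_of_no_common_root (p q : ℂ[X]) (hp : p ≠ 0) (hq : q ≠ 0)
    (h : ∀ μ : ℂ, ¬(p.IsRoot μ ∧ q.IsRoot μ)) : IsCoprime p q := by
  rw [← EuclideanDomain.gcd_isUnit_iff]
  by_contra hu
  have hg : EuclideanDomain.gcd p q ≠ 0 := fun h0 => hp
    (EuclideanDomain.gcd_eq_zero_iff.mp h0).1
  have hdeg : (EuclideanDomain.gcd p q).degree ≠ 0 := by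
    intro h0
    exact hu (Polynomial.isUnit_iff_degree_eq_zero.mpr h0)
  obtain ⟨μ, hμ⟩ := IsAlgClosed.exists_root _ hdeg
  exact h μ ⟨hμ.dvd (EuclideanDomain.gcd_dvd_left p q),
    hμ.dvd (EuclideanDomain.gcd_dvd_right p q)⟩

/-- Sylvester's theorem: if the real square matrices `A` and `B` have no common
complex eigenvalue, then `A X = X B` forces `X = 0`. -/
theorem sylvester_no_common_eigenvalue (m k : ℕ)
    (A : Matrix (Fin m) (Fin m) ℝ) (B : Matrix (Fin k) (Fin k) ℝ)
    (hdisj : ∀ μ : ℂ,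
      ¬((A.map (algebraMap ℝ ℂ)).charpoly.IsRoot μ ∧
        (B.map (algebraMap ℝ ℂ)).charpoly.IsRoot μ))
    (X : Matrix (Fin m) (Fin k) ℝ) (hX : A * X = X * B) : X = 0 := by
  set f : ℝ →+* ℂ := algebraMap ℝ ℂ
  set A' := A.map f
  set B' := B.map f
  set X' := X.map f with hX'def
  have hX' : A' * X' = X' * B' := by
    simp only [A', B', X', ← Matrix.map_mul, hX]
  set pA := A'.charpoly
  set pB := B'.charpoly
  -- coprimality
  have hcop : IsCoprime pA pB :=
    coprime_of_no_common_root _ _ (A'.charpoly_monic.ne_zero)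
      (B'.charpoly_monic.ne_zero) hdisj
  obtain ⟨u, v, huv⟩ := hcop
  -- pA(B') is invertible
  have hCH : aeval B' pB = 0 := by
    simpa [pB, aeval_def] using Matrix.aeval_self_charpoly B'
  have hunit : (aeval B' u) * (aeval B' pA) = 1 := by
    have := congrArg (aeval B') huv
    simp only [map_add, _root_.map_mul, _root_.map_one, hCH, Matrix.mul_zero, add_zero] at this
    exact this
  -- pA(A') = 0
  have hCHA : aeval A' pA = 0 := by
    simpa [pA, aeval_def] using Matrix.aeval_self_charpoly A'
  have hzero : X' * aeval B' pA = 0 := by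
    rw [← aeval_comm_of_comm A' B' X' hX' pA, hCHA, Matrix.zero_mul]
  have hXzero : X' = 0 := by
    have hunit' : (aeval B' pA) * (aeval B' u) = 1 := mul_eq_one_comm.mp hunit
    have hinv : IsUnit (aeval B' pA) := ⟨⟨aeval B' pA, aeval B' u, hunit', hunit⟩, rfl⟩
    obtain ⟨w, hw⟩ := hinv.exists_right_inv
    calc X' = X' * (aeval B' pA * w) := by rw [hw, Matrix.mul_one]
    _ = (X' * aeval B' pA) * w := by rw [Matrix.mul_assoc]
    _ = 0 := by rw [hzero, Matrix.zero_mul]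
  ext i j
  have := congrFun (congrFun hXzero i) j
  simp only [X', Matrix.map_apply, Matrix.zero_apply] at this ⊢
  exact f.injective (this.trans (map_zero f).symm)
end
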